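/- For each s ≥ 0, the gradient of u_s (which is smooth on the interior of P) maps the interior of P onto ℝⁿ: ∇u_s(int P) = ℝⁿ. -/

import Mathlib

noncomputable section

open Set MeasureTheory Topology Filter
open scoped RealInnerProductSpace Pointwise

/-- Euclidean space ℝⁿ. -/
abbrev E (n : ℕ) := EuclideanSpace ℝ (Fin n)

/-- The affine functions `l_k(y) = ⟨y, v_k⟩ − λ_k` defining the polytope. -/
def lfun {n d : ℕ} (v : Fin d → E n) (lam : Fin d → ℝ) (k : Fin d) (y : E n) : ℝ :=
  ⟪y, v k⟫ - lam k

/-- The polytope `P = ⋂_k {l_k ≥ 0}`. -/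
def Pset {n d : ℕ} (v : Fin d → E n) (lam : Fin d → ℝ) : Set (E n) :=
  {y | ∀ k, 0 ≤ lfun v lam k y}

/-- Guillemin's canonical symplectic potential `u_G = Σ l_k log l_k`
(note `Real.log 0 = 0`, so `t log t = 0` at `t = 0`). -/
def uG {n d : ℕ} (v : Fin d → E n) (lam : Fin d → ℝ) (y : E n) : ℝ :=
  ∑ k, lfun v lam k y * Real.log (lfun v lam k y)

/-- The biconjugate (convex envelope) over `P`:
`g**(y) = sup {a(y) : a affine on ℝⁿ, a ≤ g on P}`. -/
def biconj {n : ℕ} (P : Set (E n)) (g : E n → ℝ) (y : E n) : ℝ :=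
  sSup {r : ℝ | ∃ (a : E n →L[ℝ] ℝ) (c : ℝ), (∀ z ∈ P, a z + c ≤ g z) ∧ r = a y + c}

/-- The subdifferential of `g : P → ℝ` at `y`, relative to `P`. -/
def subdiff {n : ℕ} (P : Set (E n)) (g : E n → ℝ) (y : E n) : Set (E n) :=
  {w | ∀ z ∈ P, g y + ⟪w, z - y⟫ ≤ g z}

/-- The subdifferential of a finite (convex) function on all of ℝⁿ. -/
def subdiffR {n : ℕ} (f : E n → ℝ) (x : E n) : Set (E n) :=
  {w | ∀ z, f x + ⟪w, z - x⟫ ≤ f z}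

/-- The total subdifferential of `ψ(s,x)` at `(s,x)`, a subset of `ℝ × ℝⁿ = ℝ^{n+1}`. -/
def subdiffT {n : ℕ} (ψ : ℝ → E n → ℝ) (s : ℝ) (x : E n) : Set (ℝ × E n) :=
  {w | ∀ t z, ψ s x + w.1 * (t - s) + ⟪w.2, z - x⟫ ≤ ψ t z}

/-- The set of reachable partial `x`-subgradients `γ_x ψ(s,x)`. -/
def reachable {n : ℕ} (ψ : ℝ → E n → ℝ) (s : ℝ) (x : E n) : Set (E n) :=
  {w | ∃ xk : ℕ → E n, (∀ k, DifferentiableAt ℝ (ψ s) (xk k)) ∧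
    Tendsto xk atTop (𝓝 x) ∧
    Tendsto (fun k => gradient (ψ s) (xk k)) atTop (𝓝 w)}

/-- `P` is a compact Delzant polytope with nonempty interior, cut out by the `l_k`,
with all facets of dimension `n−1`, and every vertex lying on exactly `n` of the
hyperplanes `{l_k = 0}` with linearly independent normals. -/
def GoodPolytope {n d : ℕ} (v : Fin d → E n) (lam : Fin d → ℝ) (P : Set (E n)) : Prop :=
  P = Pset v lam ∧ IsCompact P ∧ (interior P).Nonempty ∧
  (∀ k, Module.finrank ℝ (affineSpan ℝ (P ∩ {y | lfun v lam k y = 0})).direction = n - 1) ∧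
  (∀ p ∈ Set.extremePoints ℝ P, ∃ K : Finset (Fin d), K.card = n ∧
    (∀ k, k ∈ K ↔ lfun v lam k p = 0) ∧ LinearIndependent ℝ (fun k : K => v ↑k))

/-- The Cauchy data: `u₀ − u_G` extends smoothly to a neighborhood of `P`, `u₀` is convex
on `P`, smooth with positive definite Hessian on `int P`; `u̇₀` extends smoothly to a
neighborhood of `P`. -/
def GoodData {n d : ℕ} (v : Fin d → E n) (lam : Fin d → ℝ) (P : Set (E n))
    (u₀ udot : E n → ℝ) : Prop :=
  (∃ U : Set (E n), IsOpen U ∧ P ⊆ U ∧ ∃ F : E n → ℝ, ContDiffOn ℝ (⊤ : ℕ∞) F U ∧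
    ∀ y ∈ P, u₀ y = uG v lam y + F y) ∧
  ConvexOn ℝ P u₀ ∧
  ContDiffOn ℝ (⊤ : ℕ∞) u₀ (interior P) ∧
  (∀ y ∈ interior P, ∀ w : E n, w ≠ 0 → 0 < ⟪(fderiv ℝ (gradient u₀) y) w, w⟫) ∧
  (∃ U : Set (E n), IsOpen U ∧ P ⊆ U ∧ ContDiffOn ℝ (⊤ : ℕ∞) udot U)

/-! Minimize `u_s − ⟪x, ·⟫` over the compact polytope `P`. Along a segment leaving a boundary
point `y` towards an interior point, every `l_k` vanishing at `y` grows linearly in `t`, so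
`u_G` contributes `C · t log t` with `C > 0` plus a term differentiable at `t = 0`; since
`t log t` has slope `−∞` at `0⁺`, `y` is not a minimizer. The minimizer is therefore interior,
where the gradient of `u_s` equals `x`. -/

open Real

theorem mul_mul_log_mul (t c : ℝ) : t * c * log (t * c) = c * (t * log t) + t * (c * log c) := by
  rcases eq_or_ne t 0 with rfl | ht
  · simp
  rcases eq_or_ne c 0 with rfl | hc
  · simp
  rw [log_mul ht hc]
  ring

theorem eventually_add_mul_mul_log_lt {H : ℝ → ℝ} {D C : ℝ} (hH : HasDerivAt H D 0)
    (hC : 0 < C) : ∀ᶠ t in 𝓝[>] 0, H t + C * (t * log t) < H 0 := by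
  have hslope : Tendsto (fun t => t⁻¹ * (H t - H 0)) (𝓝[>] 0) (𝓝 D) := by
    simpa using hH.tendsto_slope_zero_right
  have hlog : Tendsto (fun t => C * log t) (𝓝[>] 0) atBot :=
    tendsto_log_nhdsGT_zero.const_mul_atBot hC
  filter_upwards [(hslope.add_atBot hlog).eventually_lt_atBot 0, self_mem_nhdsWithin]
    with t hneg (ht : 0 < t)
  have := mul_neg_of_pos_of_neg ht hneg
  rw [mul_add, ← mul_assoc, mul_inv_cancel₀ ht.ne', one_mul] at this
  linarith

theorem gradient_eq_of_isLocalMin_sub_inner {F : Type*} [NormedAddCommGroup F]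
    [InnerProductSpace ℝ F] [CompleteSpace F] {f : F → ℝ} {x y : F}
    (hf : DifferentiableAt ℝ f y) (hmin : IsLocalMin (fun z => f z - ⟪x, z⟫) y) :
    gradient f y = x := by
  have hzero := hmin.hasFDerivAt_eq_zero (hf.hasFDerivAt.sub (innerSL ℝ x).hasFDerivAt)
  rw [gradient, sub_eq_zero.mp hzero, LinearIsometryEquiv.symm_apply_eq]
  ext z
  simp [InnerProductSpace.toDual_apply_apply]

section Polytope

variable {n d : ℕ} {v : Fin d → E n} {lam : Fin d → ℝ}

theorem continuous_lfun (k : Fin d) : Continuous (lfun v lam k) := by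
  unfold lfun
  fun_prop

theorem continuous_uG : Continuous (uG v lam) := by
  unfold uG
  exact continuous_finsetSum _ fun k _ => continuous_mul_log.comp (continuous_lfun k)

theorem lfun_add_smul (k : Fin d) (y w : E n) (t : ℝ) :
    lfun v lam k (y + t • w) = lfun v lam k y + t * ⟪w, v k⟫ := by
  simp only [lfun, inner_add_left, real_inner_smul_left]
  ring

theorem inner_sub_eq_lfun_sub (k : Fin d) (y p : E n) :
    ⟪p - y, v k⟫ = lfun v lam k p - lfun v lam k y := by
  simp only [lfun, inner_sub_left]
  ring

theorem convex_Pset : Convex ℝ (Pset v lam) := by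
  have hP : Pset v lam = ⋂ k, {y | lam k ≤ innerSL ℝ (v k) y} := by
    ext y
    simp [Pset, lfun, real_inner_comm]
  rw [hP]
  exact convex_iInter fun k => convex_halfSpace_ge (innerSL ℝ (v k)).isLinear _

theorem lfun_pos_of_mem_interior {p : E n} (hp : p ∈ interior (Pset v lam)) {k : Fin d}
    (hk : v k ≠ 0) : 0 < lfun v lam k p := by
  have hpush : ∀ᶠ ε in 𝓝[>] (0 : ℝ), p + (-ε) • v k ∈ Pset v lam := by
    have hcont : Continuous fun ε : ℝ => p + (-ε) • v k := by fun_prop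
    exact nhdsWithin_le_nhds <|
      (hcont.tendsto' 0 p (by simp)).eventually (mem_interior_iff_mem_nhds.mp hp)
  obtain ⟨ε, hεP, hε⟩ := (hpush.and self_mem_nhdsWithin).exists
  have hl := hεP k
  rw [lfun_add_smul, real_inner_self_eq_norm_sq] at hl
  have : 0 < ε * ‖v k‖ ^ 2 := by
    have := norm_pos_iff.mpr hk
    positivity
  linarith

/-- Otherwise the strict constraints at `y` cut out a neighbourhood of `y` inside `P`: a constraint
active at `y` that also vanishes at an interior point has zero normal. -/
theorem exists_lfun_eq_zero_and_pos {y p : E n} (hy : y ∈ Pset v lam)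
    (hy' : y ∉ interior (Pset v lam)) (hp : p ∈ interior (Pset v lam)) :
    ∃ k, lfun v lam k y = 0 ∧ 0 < lfun v lam k p := by
  by_contra! hinactive
  set O := ⋂ k ∈ {k | 0 < lfun v lam k y}, {z | 0 < lfun v lam k z}
  have hO : IsOpen O :=
    (Set.toFinite _).isOpen_biInter fun k _ => isOpen_lt continuous_const (continuous_lfun k)
  have hOP : O ⊆ Pset v lam := by
    intro z hz k
    rcases (hy k).lt_or_eq with hk | hk
    · exact (mem_iInter₂.mp hz k hk).le
    · have hv : v k = 0 := by
        by_contra hv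
        exact (hinactive k hk.symm).not_gt (lfun_pos_of_mem_interior hp hv)
      have hlz : lfun v lam k z = lfun v lam k y := by simp [lfun, hv]
      exact hlz ▸ hk.le
  exact hy' (interior_maximal hOP hO (mem_iInter₂.mpr fun k hk => hk))

theorem not_isMinOn_uG_add {G : E n → ℝ} {y p : E n} (hy : y ∈ Pset v lam)
    (hy' : y ∉ interior (Pset v lam)) (hp : p ∈ interior (Pset v lam))
    (hG : DifferentiableAt ℝ G y) :
    ¬ IsMinOn (fun z => uG v lam z + G z) (Pset v lam) y := by
  classical
  intro hmin
  set Y : ℝ → E n := fun t => y + t • (p - y)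
  set T := Finset.univ.filter fun k => lfun v lam k y = 0
  set c : Fin d → ℝ := fun k => lfun v lam k p - lfun v lam k y
  set C := ∑ k ∈ T, c k
  set H : ℝ → ℝ := fun t => ∑ k ∈ Finset.univ.filter (fun k => lfun v lam k y ≠ 0),
      lfun v lam k (Y t) * log (lfun v lam k (Y t)) + t * ∑ k ∈ T, c k * log (c k) + G (Y t)
  have hlY : ∀ k t, lfun v lam k (Y t) = lfun v lam k y + t * c k := by
    intro k t
    rw [lfun_add_smul, inner_sub_eq_lfun_sub]
  have hsplit : ∀ t, uG v lam (Y t) + G (Y t) = H t + C * (t * log t) := by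
    intro t
    have hT : ∑ k ∈ T, lfun v lam k (Y t) * log (lfun v lam k (Y t))
        = C * (t * log t) + t * ∑ k ∈ T, c k * log (c k) := by
      rw [Finset.sum_mul, Finset.mul_sum, ← Finset.sum_add_distrib]
      refine Finset.sum_congr rfl fun k hk => ?_
      rw [hlY, (Finset.mem_filter.mp hk).2, zero_add, mul_mul_log_mul]
    rw [uG, ← Finset.sum_filter_add_sum_filter_not _ fun k => lfun v lam k y = 0, hT]
    ring
  have hcT : ∀ k ∈ T, c k = lfun v lam k p := fun k hk => by
    simp [c, (Finset.mem_filter.mp hk).2]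
  have hC : 0 < C := by
    obtain ⟨k, hky, hkp⟩ := exists_lfun_eq_zero_and_pos hy hy' hp
    have hkT : k ∈ T := by simp [T, hky]
    exact Finset.sum_pos' (fun j hj => (hcT j hj).symm ▸ interior_subset hp j)
      ⟨k, hkT, (hcT k hkT).symm ▸ hkp⟩
  have hH : DifferentiableAt ℝ H 0 := by
    have hY : Differentiable ℝ Y := by fun_prop
    refine DifferentiableAt.add (DifferentiableAt.add ?_ (by fun_prop)) ?_
    · refine DifferentiableAt.fun_sum fun k hk => ?_
      have hk0 : lfun v lam k (Y 0) ≠ 0 := by simpa [Y] using (Finset.mem_filter.mp hk).2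
      simp only [hlY] at hk0 ⊢
      exact (differentiableAt_id.mul_const _ |>.const_add _).mul
        ((differentiableAt_id.mul_const _ |>.const_add _).log hk0)
    · exact (by simpa [Y] using hG : DifferentiableAt ℝ G (Y 0)).comp 0 (hY 0)
  have hH0 : H 0 = uG v lam y + G y := by simpa [Y] using (hsplit 0).symm
  obtain ⟨t, hdecr, ht⟩ := ((eventually_add_mul_mul_log_lt hH.hasDerivAt hC).and
    (Ioo_mem_nhdsGT one_pos)).exists
  have hYt : Y t ∈ Pset v lam :=
    convex_Pset.add_smul_sub_mem hy (interior_subset hp) ⟨ht.1.le, ht.2.le⟩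
  have := isMinOn_iff.mp hmin _ hYt
  simp only [hsplit] at this
  linarith

theorem exists_isMinOn_uG_add_mem_interior {G : E n → ℝ} (hc : IsCompact (Pset v lam))
    (hint : (interior (Pset v lam)).Nonempty) (hG : ∀ y ∈ Pset v lam, DifferentiableAt ℝ G y) :
    ∃ y ∈ interior (Pset v lam), IsMinOn (fun z => uG v lam z + G z) (Pset v lam) y := by
  obtain ⟨p, hp⟩ := hint
  obtain ⟨y, hy, hmin⟩ := hc.exists_isMinOn ⟨p, interior_subset hp⟩
    (continuous_uG.continuousOn.add fun z hz => (hG z hz).continuousAt.continuousWithinAt)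
  by_cases hy' : y ∈ interior (Pset v lam)
  · exact ⟨y, hy', hmin⟩
  · exact (not_isMinOn_uG_add hy hy' hp (hG y hy) hmin).elim

end Polytope

theorem gradient_us_surjective_general
    {n d : ℕ}
    (v : Fin d → E n) (lam : Fin d → ℝ) (P : Set (E n))
    (hP : GoodPolytope v lam P)
    (u₀ udot : E n → ℝ) (hD : GoodData v lam P u₀ udot)
    (u : ℝ → E n → ℝ) (hu : ∀ s y, u s y = u₀ y + s * udot y) :
    ∀ s : ℝ, 0 ≤ s → (fun y => gradient (u s) y) '' interior P = univ := by
  obtain ⟨rfl, hPc, hPint, -, -⟩ := hP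
  obtain ⟨⟨U, hUo, hPU, F, hF, hu₀F⟩, -, hu₀, -, ⟨U', hU'o, hPU', hudot⟩⟩ := hD
  intro s _
  refine eq_univ_of_forall fun x => ?_
  have hudotd : ∀ y ∈ Pset v lam, DifferentiableAt ℝ udot y := fun y hy =>
    (hudot.contDiffAt (hU'o.mem_nhds (hPU' hy))).differentiableAt (by simp)
  have hG : ∀ y ∈ Pset v lam, DifferentiableAt ℝ (fun z => F z + s * udot z - ⟪x, z⟫) y :=
    fun y hy => (((hF.contDiffAt (hUo.mem_nhds (hPU hy))).differentiableAt (by simp)).add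
      ((hudotd y hy).const_mul s)).sub ((innerSL ℝ x).differentiableAt)
  obtain ⟨y, hy, hmin⟩ := exists_isMinOn_uG_add_mem_interior hPc hPint hG
  have hPy : Pset v lam ∈ 𝓝 y := mem_interior_iff_mem_nhds.mp hy
  refine ⟨y, hy, gradient_eq_of_isLocalMin_sub_inner ?_ ((hmin.isLocalMin hPy).congr ?_)⟩
  · rw [show u s = fun z => u₀ z + s * udot z from funext (hu s)]
    exact ((hu₀.contDiffAt (isOpen_interior.mem_nhds hy)).differentiableAt (by simp)).add
      ((hudotd y (interior_subset hy)).const_mul s)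
  · filter_upwards [hPy] with z hz
    simp only [hu, hu₀F z hz]
    ring

/-- For each `s ≥ 0`, the gradient of `u_s` maps `int P` onto ℝⁿ. -/
theorem gradient_us_surjective
    {n d : ℕ} (hn : 1 ≤ n)
    (v : Fin d → E n) (lam : Fin d → ℝ) (P : Set (E n))
    (hP : GoodPolytope v lam P)
    (u₀ udot : E n → ℝ) (hD : GoodData v lam P u₀ udot)
    (u : ℝ → E n → ℝ) (hu : ∀ s y, u s y = u₀ y + s * udot y)
    (A : ℝ → Set (E n)) (hA : ∀ s, A s = {y ∈ P | u s y ≠ biconj P (u s) y}) :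
    ∀ s : ℝ, 0 ≤ s → (fun y => gradient (u s) y) '' interior P = univ :=
  gradient_us_surjective_general v lam P hP u₀ udot hD u hu
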